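/- With A_n, B_n as in the Heun recurrence and the quasisolution r̃_n(λ) := λ^2(3/(16(n+1)(2n+11)) + 9/(4000 n^2)) + λ((16n+41)/(8(n+1)(2n+11)) - 1/(13n)) + (4n+19)/(4n+22), define C_n(λ) := B_n(λ)/(r̃_n(λ) r̃_{n+1}(λ)). Then for every integer n ≥ 5 and every t ∈ ℝ, |C_n(it)| ≤ (56 + 25n)/(40(4+n)). -/

import Mathlib

/-!
On the imaginary axis a real quadratic `q(λ) = αλ² + βλ + c` satisfies
`|q(it)|² = (c - αt²)² + β²t²`, which dominates `(c/a)² |it + a|² = (c/a)² (a² + t²)` as soon as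
`c² ≤ a² (β² - 2αc)`. Applying this to `r̃ₙ` with `a = 2n + 2` and to `r̃ₙ₊₁` with `a = 2n + 8`
matches the two linear factors of `Bₙ`, so the dependence on `t` cancels and
`|Cₙ(it)| ≤ 5 (2n + 2)(2n + 8) / (16 (n + 2)(2n + 13) r̃ₙ(0) r̃ₙ₊₁(0))`, a rational function of `n`
alone. The remaining inequalities between rational functions of `n` become polynomials with
positive coefficients after the substitution `n = u + 5`.
-/

noncomputable def heunB (n : ℕ) (lam : ℂ) : ℂ :=
  -5 * (lam + 2 * (n : ℂ) + 2) * (lam + 2 * (n : ℂ) + 8) /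
    (16 * ((n : ℂ) + 2) * (2 * (n : ℂ) + 13))

/-- The quasisolution `r̃ₙ(λ)`. -/
noncomputable def quasi (n : ℕ) (lam : ℂ) : ℂ :=
  lam ^ 2 * (3 / (16 * ((n : ℂ) + 1) * (2 * (n : ℂ) + 11)) + 9 / (4000 * (n : ℂ) ^ 2))
    + lam * ((16 * (n : ℂ) + 41) / (8 * ((n : ℂ) + 1) * (2 * (n : ℂ) + 11)) - 1 / (13 * (n : ℂ)))
    + (4 * (n : ℂ) + 19) / (4 * (n : ℂ) + 22)

open Complex

lemma norm_I_mul_add_ofReal_sq (t a : ℝ) : ‖I * t + a‖ ^ 2 = a ^ 2 + t ^ 2 := by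
  rw [Complex.sq_norm, add_comm, mul_comm, Complex.normSq_add_mul_I]

lemma norm_quadratic_I_mul_sq (α β c t : ℝ) :
    ‖α * (I * t) ^ 2 + β * (I * t) + c‖ ^ 2 = (c - α * t ^ 2) ^ 2 + (β * t) ^ 2 := by
  have h : (α * (I * t) ^ 2 + β * (I * t) + c : ℂ)
      = ((c - α * t ^ 2 : ℝ) : ℂ) + (β * t : ℝ) * I := by
    simp only [mul_pow, I_sq]
    push_cast
    ring
  rw [h, Complex.sq_norm, Complex.normSq_add_mul_I]

lemma mul_norm_add_le_mul_norm_quadratic {α β c a : ℝ} (hc : 0 ≤ c) (ha : 0 ≤ a)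
    (h : c ^ 2 ≤ a ^ 2 * (β ^ 2 - 2 * α * c)) (t : ℝ) :
    c * ‖I * t + a‖ ≤ a * ‖α * (I * t) ^ 2 + β * (I * t) + c‖ := by
  rw [← sq_le_sq₀ (by positivity) (by positivity), mul_pow, mul_pow,
    norm_I_mul_add_ofReal_sq, norm_quadratic_I_mul_sq]
  nlinarith [mul_le_mul_of_nonneg_right h (sq_nonneg t), sq_nonneg (a * α * t ^ 2)]

noncomputable def quasiQuad (n : ℕ) : ℝ :=
  3 / (16 * ((n : ℝ) + 1) * (2 * n + 11)) + 9 / (4000 * (n : ℝ) ^ 2)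

noncomputable def quasiLin (n : ℕ) : ℝ :=
  (16 * (n : ℝ) + 41) / (8 * ((n : ℝ) + 1) * (2 * n + 11)) - 1 / (13 * (n : ℝ))

noncomputable def quasiConst (n : ℕ) : ℝ := (4 * (n : ℝ) + 19) / (4 * n + 22)

lemma quasi_eq (n : ℕ) (lam : ℂ) :
    quasi n lam = quasiQuad n * lam ^ 2 + quasiLin n * lam + quasiConst n := by
  simp only [quasi, quasiQuad, quasiLin, quasiConst]
  push_cast
  ring

lemma quasiConst_pos (n : ℕ) : 0 < quasiConst n := by
  unfold quasiConst
  positivity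

lemma quasiConst_sq_le (n : ℕ) (hn : 5 ≤ n) {a : ℝ} (ha : 2 * n + 2 ≤ a) :
    quasiConst n ^ 2 ≤ a ^ 2 * (quasiLin n ^ 2 - 2 * quasiQuad n * quasiConst n) := by
  obtain ⟨u, hu, hx⟩ : ∃ u : ℝ, 0 ≤ u ∧ (n : ℝ) = u + 5 :=
    ⟨n - 5, by rw [sub_nonneg]; exact_mod_cast hn, by ring⟩
  have key : quasiConst n ^ 2
      ≤ (2 * n + 2) ^ 2 * (quasiLin n ^ 2 - 2 * quasiQuad n * quasiConst n) := by
    simp only [quasiQuad, quasiLin, quasiConst]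
    rw [hx, ← sub_nonneg]
    field_simp
    ring_nf
    positivity
  have hD : 0 ≤ quasiLin n ^ 2 - 2 * quasiQuad n * quasiConst n :=
    nonneg_of_mul_nonneg_right ((sq_nonneg _).trans key) (by positivity)
  calc quasiConst n ^ 2 ≤ _ := key
    _ ≤ _ := by gcongr

lemma norm_heunB_I_mul (n : ℕ) (t : ℝ) :
    ‖heunB n (I * t)‖ = 5 / (16 * ((n : ℝ) + 2) * (2 * n + 13)) *
      ‖I * t + (2 * n + 2 : ℝ)‖ * ‖I * t + (2 * n + 8 : ℝ)‖ := by
  have h : heunB n (I * t) = ((-5 / (16 * ((n : ℝ) + 2) * (2 * n + 13)) : ℝ) : ℂ) *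
      (I * t + (2 * n + 2 : ℝ)) * (I * t + (2 * n + 8 : ℝ)) := by
    simp only [heunB]
    push_cast
    ring
  rw [h, norm_mul, norm_mul, Complex.norm_real, Real.norm_eq_abs, abs_div, abs_neg]
  congr
  · norm_num
  · exact abs_of_pos (by positivity)

lemma heunB_coeff_le (n : ℕ) (hn : 5 ≤ n) :
    5 / (16 * ((n : ℝ) + 2) * (2 * n + 13)) * (2 * n + 2) * (2 * n + 8)
      ≤ (56 + 25 * (n : ℝ)) / (40 * (4 + n)) * quasiConst n * quasiConst (n + 1) := by
  obtain ⟨u, hu, hx⟩ : ∃ u : ℝ, 0 ≤ u ∧ (n : ℝ) = u + 5 :=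
    ⟨n - 5, by rw [sub_nonneg]; exact_mod_cast hn, by ring⟩
  simp only [quasiConst]
  push_cast
  rw [hx, ← sub_nonneg]
  field_simp
  ring_nf
  positivity

lemma norm_heunB_I_mul_le (n : ℕ) (hn : 5 ≤ n) (t : ℝ) :
    ‖heunB n (I * t)‖
      ≤ (56 + 25 * (n : ℝ)) / (40 * (4 + n)) * (‖quasi n (I * t)‖ * ‖quasi (n + 1) (I * t)‖) := by
  have hq₁ := mul_norm_add_le_mul_norm_quadratic (quasiConst_pos n).le (a := 2 * n + 2)
    (by positivity) (quasiConst_sq_le n hn le_rfl) t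
  have hq₂ := mul_norm_add_le_mul_norm_quadratic (quasiConst_pos (n + 1)).le (a := 2 * n + 8)
    (by positivity) (quasiConst_sq_le (n + 1) (by omega) (by push_cast; linarith)) t
  rw [← quasi_eq] at hq₁ hq₂
  refine le_of_mul_le_mul_left ?_ (mul_pos (quasiConst_pos n) (quasiConst_pos (n + 1)))
  calc _ = 5 / (16 * ((n : ℝ) + 2) * (2 * n + 13)) * (quasiConst n * ‖I * t + (2 * n + 2 : ℝ)‖)
        * (quasiConst (n + 1) * ‖I * t + (2 * n + 8 : ℝ)‖) := by
          rw [norm_heunB_I_mul]; ring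
    _ ≤ 5 / (16 * ((n : ℝ) + 2) * (2 * n + 13)) * ((2 * n + 2) * ‖quasi n (I * t)‖)
        * ((2 * n + 8) * ‖quasi (n + 1) (I * t)‖) := by
          gcongr
          exact mul_nonneg (quasiConst_pos _).le (norm_nonneg _)
    _ = 5 / (16 * ((n : ℝ) + 2) * (2 * n + 13)) * (2 * n + 2) * (2 * n + 8)
        * (‖quasi n (I * t)‖ * ‖quasi (n + 1) (I * t)‖) := by ring
    _ ≤ (56 + 25 * (n : ℝ)) / (40 * (4 + n)) * quasiConst n * quasiConst (n + 1)
        * (‖quasi n (I * t)‖ * ‖quasi (n + 1) (I * t)‖) :=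
          mul_le_mul_of_nonneg_right (heunB_coeff_le n hn) (by positivity)
    _ = _ := by ring

theorem Cn_bound_on_imaginary_axis :
    ∀ n : ℕ, 5 ≤ n → ∀ t : ℝ,
      ‖heunB n (Complex.I * t) /
          (quasi n (Complex.I * t) * quasi (n + 1) (Complex.I * t))‖
        ≤ (56 + 25 * (n : ℝ)) / (40 * (4 + (n : ℝ))) := by
  intro n hn t
  rw [norm_div, norm_mul]
  exact div_le_of_le_mul₀ (by positivity) (by positivity) (norm_heunB_I_mul_le n hn t)
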